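/- For all n ≥ 0, n! = ∑_{i=0}^{n} w_i^{n-i} · V_i, where V_i is the i-th straight ménage number and w_m^k is the coefficient of x^k in c(x)^{2m+1} (c the Catalan generating function); equivalently, n! = ∑_{i=0}^{n} V_i · [x^{n-i}] c(x)^{2i+1}. -/

import Mathlib

open Finset PowerSeries

/-- Touchard's formula for the `i`-th straight ménage number `V_i`. -/
def Vm (i : ℕ) : ℚ :=
  ∑ k ∈ Finset.range (i + 1),
    (-1 : ℚ) ^ k * (Nat.choose (2 * i - k) k : ℚ) * ((i - k).factorial : ℚ)

/-- The generating function of the Catalan numbers `C_k = (2k)!/(k!(k+1)!)` over `ℚ`. -/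
noncomputable def catGF : PowerSeries ℚ :=
  PowerSeries.mk fun k => ((2 * k).factorial : ℚ) / ((k.factorial : ℚ) * ((k + 1).factorial : ℚ))

/-!
Substituting `m = i - k` in Touchard's formula rewrites the right-hand side as
`∑_m m! · [x^{n-m}] (∑_l (-1)^l C(2m+l, l) u^l) c^{2m+1}` with `u = x c²`.
Since `c = 1 + u`, the inner sum is the binomial series of `(1 + u)^{-(2m+1)}`, so the product
is `1` and only the term `m = n` survives. Only finitely many coefficients matter: the partial
sum up to `u^N` inverts `(1 + u)^{j+1}` modulo `u^{N+1}`, and `x^{N+1} ∣ u^{N+1}`.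
-/

section InvOneAddPow

variable {R : Type*} [CommRing R]

/-- The partial sum up to `u^N` of the binomial series of `(1 + u)^{-(j+1)}`. -/
def invOneAddPowTrunc (j N : ℕ) (u : R) : R :=
  ∑ l ∈ range (N + 1), (-1) ^ l * ((j + l).choose l : R) * u ^ l

theorem invOneAddPowTrunc_succ_mul_one_add (j N : ℕ) (u : R) :
    invOneAddPowTrunc (j + 1) N u * (1 + u) =
      invOneAddPowTrunc j N u + (-1) ^ N * ((j + 1 + N).choose N : R) * u ^ (N + 1) := by
  induction N with
  | zero => simp [invOneAddPowTrunc]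
  | succ N ih =>
    have pascal : ((j + 1 + (N + 1)).choose (N + 1) : R) =
        (j + 1 + N).choose N + (j + (N + 1)).choose (N + 1) := by
      rw [show j + 1 + (N + 1) = j + 1 + N + 1 by omega, Nat.choose_succ_succ',
        show j + 1 + N = j + (N + 1) by omega, Nat.cast_add]
    simp only [invOneAddPowTrunc] at ih ⊢
    rw [sum_range_succ, sum_range_succ _ (N + 1)]
    linear_combination ih + (-1) ^ (N + 1) * u ^ (N + 1) * pascal

theorem pow_succ_dvd_invOneAddPowTrunc_mul_sub_one (j N : ℕ) (u : R) :
    u ^ (N + 1) ∣ invOneAddPowTrunc j N u * (1 + u) ^ (j + 1) - 1 := by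
  induction j with
  | zero =>
    refine ⟨-(-1) ^ (N + 1), ?_⟩
    have h := geom_sum_mul_neg (-u) (N + 1)
    simp only [invOneAddPowTrunc, zero_add, Nat.choose_self, Nat.cast_one, mul_one, neg_pow u] at h ⊢
    linear_combination h
  | succ j ih =>
    obtain ⟨r, hr⟩ := ih
    refine ⟨r + (-1) ^ N * ((j + 1 + N).choose N : R) * (1 + u) ^ (j + 1), ?_⟩
    linear_combination (1 + u) ^ (j + 1) * invOneAddPowTrunc_succ_mul_one_add j N u + hr

end InvOneAddPow

theorem sum_neg_one_pow_choose_mul_coeff_pow {R : Type*} [CommRing R] {f : R⟦X⟧}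
    (hf : f = 1 + X * f ^ 2) (j N : ℕ) :
    ∑ l ∈ range (N + 1), (-1) ^ l * ((j + l).choose l : R) * coeff (N - l) (f ^ (j + 2 * l + 1)) =
      if N = 0 then 1 else 0 := by
  have hdvd : X ^ (N + 1) ∣ invOneAddPowTrunc j N (X * f ^ 2) * f ^ (j + 1) - 1 := by
    have h := pow_succ_dvd_invOneAddPowTrunc_mul_sub_one j N (X * f ^ 2)
    rw [← hf] at h
    exact (pow_dvd_pow_of_dvd (dvd_mul_right X _) _).trans h
  have hcoeff := X_pow_dvd_iff.mp hdvd N (lt_add_one N)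
  rw [map_sub, sub_eq_zero, coeff_one] at hcoeff
  rw [← hcoeff, invOneAddPowTrunc, sum_mul, map_sum]
  refine sum_congr rfl fun l hl => ?_
  have hterm : (-1) ^ l * ((j + l).choose l : R⟦X⟧) * (X * f ^ 2) ^ l * f ^ (j + 1) =
      C ((-1) ^ l * ((j + l).choose l : R)) * (X ^ l * f ^ (j + 2 * l + 1)) := by
    simp only [map_mul, map_pow, map_neg, map_one, map_natCast]
    ring
  rw [hterm, coeff_C_mul, coeff_X_pow_mul', if_pos (by simpa [Nat.lt_succ_iff] using hl)]

theorem coeff_catGF (k : ℕ) : coeff k catGF = (catalan k : ℚ) := by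
  have hcat : ((k + 1 : ℕ) : ℚ) * catalan k = (2 * k).choose k := by
    exact_mod_cast succ_mul_catalan_eq_centralBinom k
  rw [Nat.cast_choose ℚ (by omega : k ≤ 2 * k), show 2 * k - k = k by omega] at hcat
  rw [catGF, coeff_mk, Nat.factorial_succ, Nat.cast_mul]
  field_simp at hcat ⊢
  linear_combination -hcat

theorem catGF_eq_map_catalanSeries : catGF = map (Nat.castRingHom ℚ) catalanSeries := by
  ext k
  simp [coeff_catGF]

theorem catGF_eq_one_add_X_mul_sq : catGF = 1 + X * catGF ^ 2 := by
  conv_lhs => rw [catGF_eq_map_catalanSeries, ← catalanSeries_sq_mul_X_add_one]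
  rw [catGF_eq_map_catalanSeries, map_add, map_mul, map_pow, map_X, map_one]
  ring

theorem sum_range_Vm_mul (n : ℕ) (c : ℕ → ℚ) :
    ∑ i ∈ range (n + 1), Vm i * c i =
      ∑ m ∈ range (n + 1), (m.factorial : ℚ) *
        ∑ l ∈ range (n - m + 1), (-1) ^ l * ((2 * m + l).choose l : ℚ) * c (m + l) := by
  calc ∑ i ∈ range (n + 1), Vm i * c i
      = ∑ i ∈ range (n + 1), ∑ m ∈ range (i + 1), (m.factorial : ℚ) *
          ((-1) ^ (i - m) * ((2 * m + (i - m)).choose (i - m) : ℚ) * c (m + (i - m))) := by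
        refine sum_congr rfl fun i _ => ?_
        rw [Vm, sum_mul, ← sum_range_reflect]
        refine sum_congr rfl fun m hm => ?_
        have hmi : m ≤ i := Nat.lt_succ_iff.mp (mem_range.mp hm)
        rw [show i + 1 - 1 - m = i - m by omega, show i - (i - m) = m by omega,
          show 2 * i - (i - m) = 2 * m + (i - m) by omega, Nat.add_sub_cancel' hmi]
        ring
    _ = ∑ m ∈ range (n + 1), ∑ l ∈ range (n + 1 - m), (m.factorial : ℚ) *
          ((-1) ^ l * ((2 * m + l).choose l : ℚ) * c (m + l)) :=
        sum_range_diag_flip (n + 1) fun m l =>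
          (m.factorial : ℚ) * ((-1) ^ l * ((2 * m + l).choose l : ℚ) * c (m + l))
    _ = _ := by
        refine sum_congr rfl fun m hm => ?_
        rw [mul_sum, show n + 1 - m = n - m + 1 by rw [mem_range] at hm; omega]

/-- For all `n ≥ 0`: `n! = ∑_{i=0}^{n} V_i · [x^{n-i}] c(x)^{2i+1}`. -/
theorem factorial_eq_sum_V_mul_coeff (n : ℕ) :
    (n.factorial : ℚ) =
      ∑ i ∈ Finset.range (n + 1),
        Vm i * PowerSeries.coeff (R := ℚ) (n - i) (catGF ^ (2 * i + 1)) := by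
  have hinner (m : ℕ) : ∑ l ∈ range (n - m + 1), (-1) ^ l * ((2 * m + l).choose l : ℚ) *
      coeff (n - (m + l)) (catGF ^ (2 * (m + l) + 1)) = if n - m = 0 then 1 else 0 := by
    rw [← sum_neg_one_pow_choose_mul_coeff_pow catGF_eq_one_add_X_mul_sq (2 * m) (n - m)]
    refine sum_congr rfl fun l _ => ?_
    rw [Nat.sub_add_eq, show 2 * (m + l) + 1 = 2 * m + 2 * l + 1 by ring]
  rw [sum_range_Vm_mul, sum_eq_single n, hinner, Nat.sub_self, if_pos rfl, mul_one]
  · intro m hm hmn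
    rw [hinner, if_neg (by rw [mem_range] at hm; omega), mul_zero]
  · simp
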